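/- For every p ≥ 1, (1/π) ∫_{-∞}^{∞} (sin²t / t²)^p dt ≤ (1 + (1/√(3π)) · (√5/6)^{2p-1} / (√p - 1/(2√p))) · √(3/π) / √p. -/

import Mathlib

open MeasureTheory Real

/-- `(sin t / t)^2`, extended continuously by `1` at `t = 0`. -/
noncomputable def sinc2 (t : ℝ) : ℝ := if t = 0 then 1 else Real.sin t ^ 2 / t ^ 2

/-!
Near the origin, Taylor bounds with remainders of the right sign give, for `y = x² / 6`,
`sin x ≤ x - x³/6 + x⁵/120 ≤ x (1 - y + y²/2 - y³/6) ≤ x e^{-y}`, where the middle inequality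
amounts to `x² ≤ 36/5`; hence `(sin t / t)² ≤ e^{-t²/3}` for `|t| ≤ 6/√5`, and the `p`-th power is
dominated by a Gaussian of integral `√(3π/p)`. Beyond `6/√5` one uses `(sin t / t)² ≤ t⁻²`, whose
`p`-th power has tail integral `2 (√5/6)^{2p-1} / (2p-1)`.
-/

open Set

lemma le_apply_of_hasDerivAt_nonneg {f f' : ℝ → ℝ} (hf : ∀ x, HasDerivAt f (f' x) x)
    (hf' : ∀ x, 0 ≤ x → 0 ≤ f' x) {x : ℝ} (hx : 0 ≤ x) : f 0 ≤ f x :=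
  monotoneOn_of_hasDerivWithinAt_nonneg (convex_Ici 0)
    (fun y _ ↦ (hf y).continuousAt.continuousWithinAt) (fun y _ ↦ (hf y).hasDerivWithinAt)
    (fun y hy ↦ hf' y (interior_subset hy)) self_mem_Ici hx hx

lemma cos_le_one_sub_sq_div_two_add_pow_four (x : ℝ) : cos x ≤ 1 - x ^ 2 / 2 + x ^ 4 / 24 := by
  have key := le_apply_of_hasDerivAt_nonneg (f := fun x ↦ 1 - x ^ 2 / 2 + x ^ 4 / 24 - cos x)
    (f' := fun x ↦ sin x - (x - x ^ 3 / 6))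
    (fun x ↦ by
      refine ((((hasDerivAt_pow 2 x).div_const 2).const_sub 1).add
        ((hasDerivAt_pow 4 x).div_const 24)).sub (hasDerivAt_cos x) |>.congr_deriv ?_
      ring)
    (fun x hx ↦ by linarith [sin_ge_sub_cube hx]) (abs_nonneg x)
  have h4 : |x| ^ 4 = x ^ 4 := Even.pow_abs ⟨2, rfl⟩ x
  rw [cos_abs, sq_abs, h4] at key
  linarith [cos_zero]

lemma sin_le_sub_cube_add_pow_five {x : ℝ} (hx : 0 ≤ x) : sin x ≤ x - x ^ 3 / 6 + x ^ 5 / 120 := by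
  have key := le_apply_of_hasDerivAt_nonneg (f := fun x ↦ x - x ^ 3 / 6 + x ^ 5 / 120 - sin x)
    (f' := fun x ↦ 1 - x ^ 2 / 2 + x ^ 4 / 24 - cos x)
    (fun x ↦ by
      refine (((hasDerivAt_id x).sub ((hasDerivAt_pow 3 x).div_const 6)).add
        ((hasDerivAt_pow 5 x).div_const 120)).sub (hasDerivAt_sin x) |>.congr_deriv ?_
      ring)
    (fun x _ ↦ by linarith [cos_le_one_sub_sq_div_two_add_pow_four x]) hx
  linarith [sin_zero]

lemma one_sub_add_sq_sub_cube_le_exp_neg {y : ℝ} (hy : 0 ≤ y) :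
    1 - y + y ^ 2 / 2 - y ^ 3 / 6 ≤ exp (-y) := by
  have key := le_apply_of_hasDerivAt_nonneg
    (f := fun y ↦ 1 - exp y * (1 - y + y ^ 2 / 2 - y ^ 3 / 6)) (f' := fun y ↦ exp y * (y ^ 3 / 6))
    (fun y ↦ by
      refine ((hasDerivAt_exp y).mul ((((hasDerivAt_id y).const_sub 1).add
        ((hasDerivAt_pow 2 y).div_const 2)).sub ((hasDerivAt_pow 3 y).div_const 6))).const_sub 1
        |>.congr_deriv ?_
      simp only [Pi.add_apply, Pi.sub_apply, id]
      ring)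
    (fun y hy ↦ by positivity) hy
  rw [exp_neg, inv_eq_one_div, le_div_iff₀ (exp_pos y)]
  linarith [exp_zero]

lemma sin_le_mul_exp_neg_sq_div_six {x : ℝ} (hx : 0 ≤ x) (hx36 : x ^ 2 ≤ 36 / 5) :
    sin x ≤ x * exp (-(x ^ 2 / 6)) := by
  have hcubic := one_sub_add_sq_sub_cube_le_exp_neg (y := x ^ 2 / 6) (by positivity)
  calc sin x ≤ x - x ^ 3 / 6 + x ^ 5 / 120 := sin_le_sub_cube_add_pow_five hx
    _ ≤ x * (1 - x ^ 2 / 6 + (x ^ 2 / 6) ^ 2 / 2 - (x ^ 2 / 6) ^ 3 / 6) := by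
      nlinarith [mul_nonneg (pow_nonneg hx 5) (sub_nonneg.2 hx36)]
    _ ≤ x * exp (-(x ^ 2 / 6)) := mul_le_mul_of_nonneg_left hcubic hx

lemma sinc_sq_le_exp_neg_sq_div_three {t : ℝ} (ht : t ^ 2 ≤ 36 / 5) :
    sinc t ^ 2 ≤ exp (-(t ^ 2 / 3)) := by
  wlog ht0 : 0 < t generalizing t
  · rcases (not_lt.1 ht0).eq_or_lt with rfl | hneg
    · simp
    · simpa [sinc_neg] using this (t := -t) (by simpa using ht) (by linarith)
  have htπ : t ≤ π := by nlinarith [pi_gt_three]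
  have hsinc : 0 ≤ sinc t := by
    rw [sinc_of_ne_zero ht0.ne']
    exact div_nonneg (sin_nonneg_of_nonneg_of_le_pi ht0.le htπ) ht0.le
  have hsinc_le : sinc t ≤ exp (-(t ^ 2 / 6)) := by
    rw [sinc_of_ne_zero ht0.ne', div_le_iff₀ ht0, mul_comm]
    exact sin_le_mul_exp_neg_sq_div_six ht0.le ht
  calc sinc t ^ 2 ≤ exp (-(t ^ 2 / 6)) ^ 2 := pow_le_pow_left₀ hsinc hsinc_le 2
    _ = exp (-(t ^ 2 / 3)) := by rw [← exp_nat_mul]; ring_nf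

lemma sinc2_eq_sinc_sq (t : ℝ) : sinc2 t = sinc t ^ 2 := by
  rw [sinc2, sinc]
  split_ifs <;> simp [div_pow]

lemma sinc2_nonneg (t : ℝ) : 0 ≤ sinc2 t := sinc2_eq_sinc_sq t ▸ sq_nonneg _

lemma sinc2_le_abs_rpow_neg_two {t : ℝ} (ht : t ≠ 0) : sinc2 t ≤ |t| ^ (-2 : ℝ) := by
  rw [sinc2, if_neg ht, rpow_neg (abs_nonneg t), rpow_two, sq_abs, inv_eq_one_div]
  exact div_le_div_of_nonneg_right (sin_sq_le_one t) (sq_nonneg t)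

lemma sinc2_rpow_le {p a : ℝ} (hp : 0 ≤ p) (ha0 : 0 ≤ a) (ha : a ^ 2 ≤ 36 / 5) (t : ℝ) :
    sinc2 t ^ p ≤ exp (-(p / 3) * t ^ 2) +
      ((Ioi a).indicator (· ^ (-2 * p)) t + (Ioi a).indicator (· ^ (-2 * p)) (-t)) := by
  have hk : ∀ s, 0 ≤ (Ioi a).indicator (· ^ (-2 * p)) s :=
    fun s ↦ indicator_nonneg (fun s hs ↦ rpow_nonneg (ha0.trans hs.le) _) s
  rcases le_or_gt |t| a with hta | hta
  · have ht36 : t ^ 2 ≤ 36 / 5 := by nlinarith [sq_abs t, abs_nonneg t]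
    have hcentral : sinc2 t ^ p ≤ exp (-(p / 3) * t ^ 2) := by
      calc sinc2 t ^ p ≤ exp (-(t ^ 2 / 3)) ^ p := by
            rw [sinc2_eq_sinc_sq]
            exact rpow_le_rpow (sq_nonneg _) (sinc_sq_le_exp_neg_sq_div_three ht36) hp
        _ = exp (-(p / 3) * t ^ 2) := by rw [← exp_mul]; ring_nf
    linarith [hk t, hk (-t)]
  · have ht0 : t ≠ 0 := abs_pos.1 (ha0.trans_lt hta)
    have htail : sinc2 t ^ p ≤ |t| ^ (-2 * p) := by
      rw [rpow_mul (abs_nonneg t)]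
      exact rpow_le_rpow (sinc2_nonneg t) (sinc2_le_abs_rpow_neg_two ht0) hp
    have hgauss := exp_pos (-(p / 3) * t ^ 2)
    rcases abs_choice t with h | h <;> rw [h] at hta htail
    · rw [indicator_of_mem (show t ∈ Ioi a from hta)]
      linarith [hk (-t)]
    · rw [indicator_of_mem (show -t ∈ Ioi a from hta)]
      linarith [hk t]

lemma integral_sinc2_rpow_le {p a : ℝ} (hp : 1 / 2 < p) (ha0 : 0 < a) (ha : a ^ 2 ≤ 36 / 5) :
    ∫ t, sinc2 t ^ p ≤ √(π / (p / 3)) + 2 * (a ^ (1 - 2 * p) / (2 * p - 1)) := by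
  set k := (Ioi a).indicator (· ^ (-2 * p))
  have hk : Integrable k :=
    (integrableOn_Ioi_rpow_of_lt (by linarith) ha0).integrable_indicator measurableSet_Ioi
  have htail : Integrable fun t ↦ k t + k (-t) := hk.add hk.comp_neg
  have hgauss : Integrable fun t : ℝ ↦ exp (-(p / 3) * t ^ 2) :=
    integrable_exp_neg_mul_sq (by linarith)
  calc ∫ t, sinc2 t ^ p ≤ ∫ t, exp (-(p / 3) * t ^ 2) + (k t + k (-t)) :=
        integral_mono_of_nonneg (ae_of_all _ fun t ↦ rpow_nonneg (sinc2_nonneg t) p)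
          (hgauss.add htail) (ae_of_all _ (sinc2_rpow_le (by linarith) ha0.le ha))
    _ = √(π / (p / 3)) + 2 * (a ^ (1 - 2 * p) / (2 * p - 1)) := by
      rw [integral_add hgauss htail, integral_add hk hk.comp_neg, integral_neg_eq_self,
        integral_gaussian, integral_indicator measurableSet_Ioi,
        integral_Ioi_rpow_of_lt (by linarith) ha0, show -2 * p + 1 = -(2 * p - 1) by ring,
        neg_div_neg_eq, neg_sub]
      ring

lemma one_div_pi_mul_gaussian_add_tail_eq {p : ℝ} (hp : 0 < p) (X : ℝ) :
    1 / π * (√(π / (p / 3)) + 2 * (X / (2 * p - 1))) =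
      (1 + 1 / √(3 * π) * X / (√p - 1 / (2 * √p))) * √(3 / π) / √p := by
  rw [show π / (p / 3) = 3 * π / p by field_simp, sqrt_div' _ hp.le, sqrt_mul (by norm_num),
    sqrt_div' _ pi_pos.le]
  have hπ : √π ^ 2 = π := sq_sqrt pi_pos.le
  have hp' : √p ^ 2 = p := sq_sqrt hp.le
  field_simp
  rw [hπ, hp']
  ring

theorem improved_ball_inequality (p : ℝ) (hp : 1 ≤ p) :
    (1 / π) * ∫ t : ℝ, sinc2 t ^ p ≤
      (1 + (1 / Real.sqrt (3 * π)) *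
          (Real.sqrt 5 / 6) ^ (2 * p - 1) / (Real.sqrt p - 1 / (2 * Real.sqrt p))) *
        Real.sqrt (3 / π) / Real.sqrt p := by
  have ha : (6 / √5) ^ 2 = 36 / 5 := by rw [div_pow, sq_sqrt (by norm_num)]; norm_num
  have hpow : (6 / √5) ^ (1 - 2 * p) = (√5 / 6) ^ (2 * p - 1) := by
    rw [show 1 - 2 * p = -(2 * p - 1) by ring, rpow_neg (by positivity), ← inv_rpow (by positivity),
      inv_div]
  calc (1 / π) * ∫ t, sinc2 t ^ p
      ≤ 1 / π * (√(π / (p / 3)) + 2 * ((6 / √5) ^ (1 - 2 * p) / (2 * p - 1))) := by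
        gcongr
        exact integral_sinc2_rpow_le (by linarith) (by positivity) ha.le
    _ = _ := by rw [hpow, one_div_pi_mul_gaussian_add_tail_eq (by linarith)]
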